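/- Let f(r) be the density of GED(α, σ, κ) with σ > 0, κ > 0, and define U(w, β) = β if w ≥ β and U(w, β) = w if w < β. Then for any h ∈ ℝ, ∫_{-∞}^{∞} U(h r, h α) f(r) dr = h(α − σ τ(κ) sign(h)), where τ(κ) = Γ(2κ+1)/(2^{2-κ} Γ(κ+1)) and sign(0) = 0. -/

import Mathlib

open MeasureTheory

noncomputable def gedDensity (μ σ κ : ℝ) (r : ℝ) : ℝ :=
  Real.exp (-(1 / 2) * |(r - μ) / σ| ^ (1 / κ)) /
    (2 ^ (κ + 1) * σ * Real.Gamma (κ + 1))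

noncomputable def tau (κ : ℝ) : ℝ :=
  Real.Gamma (2 * κ + 1) / (2 ^ ((2 : ℝ) - κ) * Real.Gamma (κ + 1))

noncomputable def U (w β : ℝ) : ℝ := if w ≥ β then β else w

/-!
Write `U w β = min w β = (w + β - |w - β|) / 2` and standardise `r = α + σ x`, under which the
density becomes that of `GED(0, 1, κ)`. The expected utility is then `h α` times the total mass
(`1`), plus `h σ / 2` times the first moment (`0`, the density being even), minus `|h| σ / 2`
times the first absolute moment `2 τ(κ)`; the absolute moments `E|x|^s = 2^{sκ} Γ((s+1)κ) / Γ(κ)`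
come from the Gamma integral `∫₀^∞ x^s e^{-b x^p} dx = b^{-(s+1)/p} Γ((s+1)/p) / p`.
-/

open Real Set

lemma U_eq_min (w β : ℝ) : U w β = min w β := (min_def' w β).symm

lemma U_eq_half_add_sub_abs_sub (w β : ℝ) : U w β = (w + β - |w - β|) / 2 := by
  rw [U_eq_min, inf_eq_half_smul_add_sub_abs_sub' ℝ, abs_sub_comm, smul_eq_mul]
  ring

lemma Real.mul_sign_eq_abs (x : ℝ) : x * Real.sign x = |x| := by
  rcases lt_trichotomy x 0 with hx | rfl | hx
  · rw [Real.sign_of_neg hx, abs_of_neg hx, mul_neg_one]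
  · simp
  · rw [Real.sign_of_pos hx, abs_of_pos hx, mul_one]

lemma integrable_comp_abs {f : ℝ → ℝ} (hf : IntegrableOn f (Ioi 0)) :
    Integrable fun x ↦ f |x| := by
  have hpos : IntegrableOn (fun x ↦ f |x|) (Ioi 0) :=
    hf.congr_fun (fun x hx ↦ by rw [abs_of_pos hx]) measurableSet_Ioi
  have hneg : IntegrableOn (fun x ↦ f |x|) (Iic 0) := by
    rw [← Measure.map_neg_eq_self (volume : Measure ℝ),
      measurableEmbedding_neg.integrableOn_map_iff]
    simp_rw [Function.comp_def, abs_neg, neg_preimage, neg_Iic, neg_zero]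
    exact Iff.mpr integrableOn_Ici_iff_integrableOn_Ioi hpos
  rw [← integrableOn_univ, ← Iic_union_Ioi (a := (0 : ℝ))]
  exact hneg.union hpos

lemma integral_mul_eq_zero_of_even {g : ℝ → ℝ} (hg : ∀ x, g (-x) = g x) :
    ∫ x, x * g x = 0 := by
  have h := integral_neg_eq_self (fun x ↦ x * g x) volume
  simp only [hg, neg_mul, integral_neg] at h
  linarith

section AbsRpowExp

variable {b p s : ℝ}

lemma integrable_abs_rpow_mul_exp_neg_mul_abs_rpow (hs : -1 < s) (hp : 0 < p) (hb : 0 < b) :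
    Integrable fun x : ℝ ↦ |x| ^ s * exp (-b * |x| ^ p) :=
  integrable_comp_abs (f := fun t ↦ t ^ s * exp (-b * t ^ p))
    (integrableOn_rpow_mul_exp_neg_mul_rpow hs hp hb)

lemma integral_abs_rpow_mul_exp_neg_mul_abs_rpow (hs : -1 < s) (hp : 0 < p) (hb : 0 < b) :
    ∫ x : ℝ, |x| ^ s * exp (-b * |x| ^ p) =
      2 * (b ^ (-(s + 1) / p) * (1 / p) * Gamma ((s + 1) / p)) := by
  rw [integral_comp_abs (f := fun t ↦ t ^ s * exp (-b * t ^ p)),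
    integral_rpow_mul_exp_neg_mul_rpow hp hs hb]

end AbsRpowExp

section GED

variable {α σ κ : ℝ}

lemma gedDensity_zero_one (κ x : ℝ) :
    gedDensity 0 1 κ x = exp (-(1 / 2) * |x| ^ (1 / κ)) / (2 ^ (κ + 1) * Gamma (κ + 1)) := by
  simp [gedDensity]

lemma gedDensity_add_mul (hσ : σ ≠ 0) (x : ℝ) :
    gedDensity α σ κ (α + σ * x) = gedDensity 0 1 κ x / σ := by
  rw [gedDensity, gedDensity_zero_one, add_sub_cancel_left, mul_div_cancel_left₀ _ hσ]
  field_simp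

lemma integral_mul_gedDensity_eq_integral_comp_add_mul (hσ : 0 < σ) (g : ℝ → ℝ) :
    ∫ r, g r * gedDensity α σ κ r = ∫ x, g (α + σ * x) * gedDensity 0 1 κ x := by
  set F := fun r ↦ g r * gedDensity α σ κ r
  calc ∫ r, F r = ∫ y, F (α + y) := (integral_add_left_eq_self F α).symm
    _ = σ * ∫ x, F (α + σ * x) := by
      rw [Measure.integral_comp_mul_left (fun y ↦ F (α + y)) σ, abs_of_pos (inv_pos.mpr hσ),
        smul_eq_mul, mul_inv_cancel_left₀ hσ.ne']
    _ = ∫ x, g (α + σ * x) * gedDensity 0 1 κ x := by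
      rw [← integral_const_mul]
      refine integral_congr_ae (ae_of_all _ fun x ↦ ?_)
      simp only [F, gedDensity_add_mul hσ.ne']
      field_simp

lemma gedDensity_zero_one_neg (κ x : ℝ) : gedDensity 0 1 κ (-x) = gedDensity 0 1 κ x := by
  rw [gedDensity_zero_one, gedDensity_zero_one, abs_neg]

lemma integrable_abs_rpow_mul_gedDensity {s : ℝ} (hκ : 0 < κ) (hs : -1 < s) :
    Integrable fun x ↦ |x| ^ s * gedDensity 0 1 κ x := by
  simp_rw [gedDensity_zero_one, mul_div_assoc']
  exact (integrable_abs_rpow_mul_exp_neg_mul_abs_rpow hs (by positivity) one_half_pos).div_const _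

lemma integral_abs_rpow_mul_gedDensity {s : ℝ} (hκ : 0 < κ) (hs : -1 < s) :
    ∫ x, |x| ^ s * gedDensity 0 1 κ x = 2 ^ (s * κ) * Gamma ((s + 1) * κ) / Gamma κ := by
  simp_rw [gedDensity_zero_one, mul_div_assoc']
  rw [integral_div, integral_abs_rpow_mul_exp_neg_mul_abs_rpow hs (by positivity) one_half_pos,
    Gamma_add_one hκ.ne']
  have hpow : (2 : ℝ) * (1 / 2) ^ (-(s + 1) / (1 / κ)) = 2 ^ (κ + 1) * 2 ^ (s * κ) := by
    have : 0 < (s + 1) * κ := mul_pos (by linarith) hκ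
    rw [div_div_eq_mul_div, div_one, one_div, inv_rpow two_pos.le, ← rpow_neg two_pos.le,
      ← rpow_add two_pos, ← rpow_one_add' two_pos.le (ne_of_gt (by linarith))]
    ring_nf
  have hΓ : 0 < Gamma κ := Gamma_pos_of_pos hκ
  rw [← mul_assoc, ← mul_assoc, hpow]
  field_simp

lemma integrable_gedDensity (hκ : 0 < κ) : Integrable (gedDensity 0 1 κ) := by
  simpa using integrable_abs_rpow_mul_gedDensity hκ (s := 0) (by norm_num)

lemma integrable_abs_mul_gedDensity (hκ : 0 < κ) :
    Integrable fun x ↦ |x| * gedDensity 0 1 κ x := by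
  simpa using integrable_abs_rpow_mul_gedDensity hκ (s := 1) (by norm_num)

lemma integrable_mul_gedDensity (hκ : 0 < κ) : Integrable fun x ↦ x * gedDensity 0 1 κ x :=
  (integrable_abs_mul_gedDensity hκ).mono
    (aestronglyMeasurable_id.mul (integrable_gedDensity hκ).aestronglyMeasurable)
    (ae_of_all _ fun x ↦ by simp only [norm_mul, norm_eq_abs, abs_abs, le_refl])

lemma integral_gedDensity (hκ : 0 < κ) : ∫ x, gedDensity 0 1 κ x = 1 := by
  simpa [(Gamma_pos_of_pos hκ).ne'] using
    integral_abs_rpow_mul_gedDensity hκ (s := 0) (by norm_num)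

lemma integral_abs_mul_gedDensity (hκ : 0 < κ) : ∫ x, |x| * gedDensity 0 1 κ x = 2 * tau κ := by
  have h := integral_abs_rpow_mul_gedDensity hκ (s := 1) (by norm_num)
  simp only [rpow_one, one_mul] at h
  rw [h, tau, show (1 + 1) * κ = 2 * κ by ring, Gamma_add_one hκ.ne',
    Gamma_add_one (by positivity), rpow_sub two_pos, rpow_two]
  have hΓ : 0 < Gamma κ := Gamma_pos_of_pos hκ
  have h2 : (0 : ℝ) < 2 ^ κ := by positivity
  field_simp

end GED

theorem expected_utility (α σ κ : ℝ) (hσ : 0 < σ) (hκ : 0 < κ) (h : ℝ) :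
    ∫ r : ℝ, U (h * r) (h * α) * gedDensity α σ κ r =
      h * (α - σ * tau κ * Real.sign h) := by
  set φ := gedDensity 0 1 κ
  have hU (x : ℝ) : U (h * (α + σ * x)) (h * α) * φ x =
      h * α * φ x + h * σ / 2 * (x * φ x) - |h| * σ / 2 * (|x| * φ x) := by
    rw [U_eq_half_add_sub_abs_sub, show h * (α + σ * x) - h * α = h * σ * x by ring, abs_mul,
      abs_mul, abs_of_pos hσ]
    ring
  have i0 : Integrable fun x ↦ h * α * φ x := (integrable_gedDensity hκ).const_mul _
  have i1 : Integrable fun x ↦ h * σ / 2 * (x * φ x) := (integrable_mul_gedDensity hκ).const_mul _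
  have i2 : Integrable fun x ↦ |h| * σ / 2 * (|x| * φ x) :=
    (integrable_abs_mul_gedDensity hκ).const_mul _
  rw [integral_mul_gedDensity_eq_integral_comp_add_mul hσ, integral_congr_ae (ae_of_all _ hU),
    integral_sub (i0.fun_add i1) i2,
    integral_add i0 i1, integral_const_mul, integral_const_mul, integral_const_mul,
    integral_gedDensity hκ, integral_mul_eq_zero_of_even (gedDensity_zero_one_neg κ),
    integral_abs_mul_gedDensity hκ, ← Real.mul_sign_eq_abs]
  ring
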